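/- arXiv:1608.01344 — 7 statements merged into one kernel-verified Lean document; each statement's English description precedes it below -/
import Mathlib

section
/- Von Neumann amplification factor of the GA θ-ICN method: let R, θ₁, θ₂, k, Δx ∈ ℝ with θ₁·θ₂ = 1/4, and let u : ℤ → ℂ be the plane wave u(j) = exp(i·k·j·Δx). Then for every j ∈ ℤ, G_{θ₁,θ₂,R}(u)(j) = g·u(j), where g = 1 − 2βi − 2β² + 4θ₁β³·i and β = R·sin(kΔx). -/
open Complex

/-- The geometric-averaging (GA) θ-ICN step with mesh ratio `R` and weights `θ₁, θ₂`,
acting on complex-valued grid functions. -/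
noncomputable def gaStepC (θ₁ θ₂ R : ℝ) (u : ℤ → ℂ) : ℤ → ℂ := fun j =>
  let ut1 : ℤ → ℂ := fun j => u j - (R : ℂ) * (u (j + 1) - u (j - 1))
  let w1 : ℤ → ℂ := fun j => (θ₁ : ℂ) * ut1 j + (1 - (θ₁ : ℂ)) * u j
  let ut2 : ℤ → ℂ := fun j => u j - 2 * (θ₁ : ℂ) * (R : ℂ) * (w1 (j + 1) - w1 (j - 1))
  let w2 : ℤ → ℂ := fun j => (θ₂ : ℂ) * ut2 j + (1 - (θ₂ : ℂ)) * u j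
  u j - (R : ℂ) * (w2 (j + 1) - w2 (j - 1))

theorem gaStep_amplification (R θ₁ θ₂ k Δx : ℝ) (hθ : θ₁ * θ₂ = 1 / 4)
    (u : ℤ → ℂ) (hu : ∀ j : ℤ, u j = Complex.exp (Complex.I * k * j * Δx)) (j : ℤ) :
    gaStepC θ₁ θ₂ R u j =
      (1 - 2 * (R * Real.sin (k * Δx) : ℝ) * Complex.I
        - 2 * ((R * Real.sin (k * Δx) : ℝ) : ℂ) ^ 2
        + 4 * (θ₁ : ℂ) * ((R * Real.sin (k * Δx) : ℝ) : ℂ) ^ 3 * Complex.I) * u j := by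
  set t : ℝ := Real.sin (k * Δx) with ht
  have hstep : ∀ m : ℤ, u (m + 1) - u (m - 1) = 2 * (t : ℂ) * Complex.I * u m := by
    intro m
    rw [hu, hu, hu]
    have e1 : Complex.I * (k : ℂ) * ((m + 1 : ℤ) : ℂ) * (Δx : ℂ)
        = Complex.I * (k : ℂ) * (m : ℂ) * (Δx : ℂ) + ((k * Δx : ℝ) : ℂ) * Complex.I := by
      push_cast; ring
    have e2 : Complex.I * (k : ℂ) * ((m - 1 : ℤ) : ℂ) * (Δx : ℂ)
        = Complex.I * (k : ℂ) * (m : ℂ) * (Δx : ℂ) + (-((k * Δx : ℝ) : ℂ)) * Complex.I := by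
      push_cast; ring
    rw [e1, e2, Complex.exp_add, Complex.exp_add, Complex.exp_mul_I, Complex.exp_mul_I]
    rw [Complex.cos_neg, Complex.sin_neg]
    rw [← Complex.ofReal_sin, ← Complex.ofReal_cos, ← ht]
    ring
  have hθ' : (θ₁ : ℂ) * (θ₂ : ℂ) = 1 / 4 := by
    rw [← Complex.ofReal_mul, hθ]; norm_num
  have hI : (Complex.I : ℂ) ^ 2 = -1 := Complex.I_sq
  set s : ℂ := 2 * (t : ℂ) * Complex.I with hs
  let ut1 : ℤ → ℂ := fun m => u m - (R : ℂ) * (u (m + 1) - u (m - 1))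
  let w1 : ℤ → ℂ := fun m => (θ₁ : ℂ) * ut1 m + (1 - (θ₁ : ℂ)) * u m
  let ut2 : ℤ → ℂ := fun m => u m - 2 * (θ₁ : ℂ) * (R : ℂ) * (w1 (m + 1) - w1 (m - 1))
  let w2 : ℤ → ℂ := fun m => (θ₂ : ℂ) * ut2 m + (1 - (θ₂ : ℂ)) * u m
  have expand : gaStepC θ₁ θ₂ R u j = u j - (R : ℂ) * (w2 (j + 1) - w2 (j - 1)) := rfl
  have h1 : ∀ m, ut1 m = (1 - (R:ℂ) * s) * u m := by
    intro m; show u m - (R:ℂ) * (u (m+1) - u (m-1)) = _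
    rw [hstep m]; ring
  have hw1 : ∀ m, w1 m = (1 - (θ₁:ℂ) * (R:ℂ) * s) * u m := by
    intro m; show (θ₁:ℂ) * ut1 m + (1 - (θ₁:ℂ)) * u m = _
    rw [h1 m]; ring
  have h2 : ∀ m, ut2 m = (1 - 2 * (θ₁:ℂ) * (R:ℂ) * s + 2 * (θ₁:ℂ)^2 * (R:ℂ)^2 * s^2) * u m := by
    intro m
    show u m - 2 * (θ₁:ℂ) * (R:ℂ) * (w1 (m+1) - w1 (m-1)) = _
    rw [hw1 (m+1), hw1 (m-1), ← mul_sub, hstep m]; ring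
  have hw2 : ∀ m, w2 m = (1 - 2 * (θ₁:ℂ) * (θ₂:ℂ) * (R:ℂ) * s
      + 2 * (θ₁:ℂ)^2 * (θ₂:ℂ) * (R:ℂ)^2 * s^2) * u m := by
    intro m; show (θ₂:ℂ) * ut2 m + (1 - (θ₂:ℂ)) * u m = _
    rw [h2 m]; ring
  have key : gaStepC θ₁ θ₂ R u j
      = (1 - (R:ℂ) * s + 2 * (θ₁:ℂ) * (θ₂:ℂ) * (R:ℂ)^2 * s^2
          - 2 * (θ₁:ℂ)^2 * (θ₂:ℂ) * (R:ℂ)^3 * s^3) * u j := by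
    rw [expand, hw2 (j+1), hw2 (j-1), ← mul_sub, hstep j]; ring
  rw [key, hs]
  push_cast
  linear_combination
    u j * (8 * (R:ℂ)^2 * (t:ℂ)^2 * Complex.I^2
      - 16 * (θ₁:ℂ) * (R:ℂ)^3 * (t:ℂ)^3 * Complex.I^3) * hθ'
    + u j * (2 * (R:ℂ)^2 * (t:ℂ)^2 - 4 * (θ₁:ℂ) * (R:ℂ)^3 * (t:ℂ)^3 * Complex.I) * hI
end

section
/- Stability of the GA θ-ICN method: for real θ₁ and β, the complex number g = 1 − 2βi − 2β² + 4θ₁β³·i satisfies |g|² = 1 + 4(1 − 4θ₁)β⁴ + 16θ₁²β⁶. Consequently, if θ₁ ≥ 1/4 and 4θ₁²β² ≤ 4θ₁ − 1, then |g| ≤ 1. -/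
open Complex

def gaAmplificationFactor (θ₁ β : ℝ) : ℂ :=
  1 - 2 * (β : ℂ) * I - 2 * (β : ℂ) ^ 2 + 4 * (θ₁ : ℂ) * (β : ℂ) ^ 3 * I

theorem gaAmplificationFactor_eq_mk (θ₁ β : ℝ) :
    gaAmplificationFactor θ₁ β = ⟨1 - 2 * β ^ 2, 4 * θ₁ * β ^ 3 - 2 * β⟩ := by
  apply Complex.ext <;> simp [gaAmplificationFactor, ← ofReal_pow]; ring

theorem norm_gaAmplificationFactor_sq (θ₁ β : ℝ) :
    ‖gaAmplificationFactor θ₁ β‖ ^ 2 = 1 + 4 * (1 - 4 * θ₁) * β ^ 4 + 16 * θ₁ ^ 2 * β ^ 6 := by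
  rw [Complex.sq_norm, gaAmplificationFactor_eq_mk, normSq_mk]
  ring

theorem norm_gaAmplificationFactor_sq_sub_one (θ₁ β : ℝ) :
    ‖gaAmplificationFactor θ₁ β‖ ^ 2 - 1 = 4 * β ^ 4 * (4 * θ₁ ^ 2 * β ^ 2 - (4 * θ₁ - 1)) := by
  rw [norm_gaAmplificationFactor_sq]
  ring

theorem norm_gaAmplificationFactor_le_one {θ₁ β : ℝ}
    (h : 4 * θ₁ ^ 2 * β ^ 2 ≤ 4 * θ₁ - 1) : ‖gaAmplificationFactor θ₁ β‖ ≤ 1 := by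
  have hsq : ‖gaAmplificationFactor θ₁ β‖ ^ 2 - 1 ≤ 0 := by
    rw [norm_gaAmplificationFactor_sq_sub_one]
    exact mul_nonpos_of_nonneg_of_nonpos (by positivity) (sub_nonpos.2 h)
  exact (sq_le_one_iff₀ (norm_nonneg _)).1 (sub_nonpos.1 hsq)

theorem gaStep_stability (θ₁ β : ℝ)
    (g : ℂ)
    (hg : g = 1 - 2 * (β : ℂ) * Complex.I - 2 * (β : ℂ) ^ 2
        + 4 * (θ₁ : ℂ) * (β : ℂ) ^ 3 * Complex.I) :
    ‖g‖ ^ 2 = 1 + 4 * (1 - 4 * θ₁) * β ^ 4 + 16 * θ₁ ^ 2 * β ^ 6 ∧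
      (θ₁ ≥ 1 / 4 → 4 * θ₁ ^ 2 * β ^ 2 ≤ 4 * θ₁ - 1 → ‖g‖ ≤ 1) := by
  obtain rfl : g = gaAmplificationFactor θ₁ β := hg
  exact ⟨norm_gaAmplificationFactor_sq θ₁ β, fun _ h => norm_gaAmplificationFactor_le_one h⟩
end

section
/- Stability of the standard ICN method: for every real β, the complex number g = 1 − 2βi − 2β² + 2β³·i satisfies |g|² = 1 − 4β⁴(1 − β²); in particular, |g| ≤ 1 whenever β² ≤ 1. -/
open Complex

/- Splitting g into real part 1 - 2β² and imaginary part 2β(β² - 1) gives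
|g|² = (1 - 2β²)² + 4β²(1 - β²)² = 1 - 4β⁴(1 - β²), and the correction term
4β⁴(1 - β²) is nonnegative exactly when β² ≤ 1. -/

lemma icn_factor_eq_re_add_im_mul_I (β : ℝ) :
    1 - 2 * (β : ℂ) * I - 2 * (β : ℂ) ^ 2 + 2 * (β : ℂ) ^ 3 * I =
      ((1 - 2 * β ^ 2 : ℝ) : ℂ) + ((2 * β ^ 3 - 2 * β : ℝ) : ℂ) * I := by
  push_cast
  ring

lemma sq_norm_icn_factor (β : ℝ) :
    ‖1 - 2 * (β : ℂ) * I - 2 * (β : ℂ) ^ 2 + 2 * (β : ℂ) ^ 3 * I‖ ^ 2 =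
      1 - 4 * β ^ 4 * (1 - β ^ 2) := by
  rw [Complex.sq_norm, icn_factor_eq_re_add_im_mul_I, normSq_add_mul_I]
  ring

theorem icn_stability (β : ℝ)
    (g : ℂ)
    (hg : g = 1 - 2 * (β : ℂ) * Complex.I - 2 * (β : ℂ) ^ 2
        + 2 * (β : ℂ) ^ 3 * Complex.I) :
    ‖g‖ ^ 2 = 1 - 4 * β ^ 4 * (1 - β ^ 2) ∧
      (β ^ 2 ≤ 1 → ‖g‖ ≤ 1) := by
  have hnorm : ‖g‖ ^ 2 = 1 - 4 * β ^ 4 * (1 - β ^ 2) := hg ▸ sq_norm_icn_factor β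
  refine ⟨hnorm, fun hβ => ?_⟩
  have hdamp : 0 ≤ 4 * β ^ 4 * (1 - β ^ 2) := by
    have := sub_nonneg.2 hβ
    positivity
  rw [← pow_le_one_iff_of_nonneg (norm_nonneg g) two_ne_zero, hnorm]
  linarith
end

section
/- Von Neumann amplification factor of the θ-ICN method: let R, θ, k, Δx ∈ ℝ and let u : ℤ → ℂ be the plane wave u(j) = exp(i·k·j·Δx). Then for every j ∈ ℤ, S_{θ,R}(u)(j) = g_θ·u(j), where g_θ = 1 − 2βi − 4θβ² + 8θ²β³·i and β = R·sin(kΔx). -/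
open Complex

/-- The two-iteration θ-ICN step with mesh ratio `R` and weight `θ`,
acting on complex-valued grid functions. -/
noncomputable def icnStepC (θ R : ℝ) (u : ℤ → ℂ) : ℤ → ℂ := fun j =>
  let ut1 : ℤ → ℂ := fun j => u j - (R : ℂ) * (u (j + 1) - u (j - 1))
  let w1 : ℤ → ℂ := fun j => (θ : ℂ) * ut1 j + (1 - (θ : ℂ)) * u j
  let ut2 : ℤ → ℂ := fun j => u j - (R : ℂ) * (w1 (j + 1) - w1 (j - 1))
  let w2 : ℤ → ℂ := fun j => (θ : ℂ) * ut2 j + (1 - (θ : ℂ)) * u j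
  u j - (R : ℂ) * (w2 (j + 1) - w2 (j - 1))

theorem icnStep_amplification (R θ k Δx : ℝ)
    (u : ℤ → ℂ) (hu : ∀ j : ℤ, u j = Complex.exp (Complex.I * k * j * Δx)) (j : ℤ) :
    icnStepC θ R u j =
      (1 - 2 * ((R * Real.sin (k * Δx) : ℝ) : ℂ) * Complex.I
        - 4 * (θ : ℂ) * ((R * Real.sin (k * Δx) : ℝ) : ℂ) ^ 2
        + 8 * (θ : ℂ) ^ 2 * ((R * Real.sin (k * Δx) : ℝ) : ℂ) ^ 3 * Complex.I) * u j := by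
  set E : ℂ := Complex.exp ((k : ℂ) * (Δx : ℂ) * Complex.I) with hE
  set F : ℂ := Complex.exp (-((k : ℂ) * (Δx : ℂ)) * Complex.I) with hF
  have hp : ∀ m : ℤ, u (m + 1) = E * u m := by
    intro m
    rw [hu, hu, hE, ← Complex.exp_add]
    congr 1
    push_cast
    ring
  have hm : ∀ m : ℤ, u (m - 1) = F * u m := by
    intro m
    rw [hu, hu, hF, ← Complex.exp_add]
    congr 1
    push_cast
    ring
  have hsin : E - F = 2 * Complex.sin ((k : ℂ) * (Δx : ℂ)) * Complex.I := by
    rw [Complex.sin, hE, hF]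
    linear_combination (Complex.exp ((k : ℂ) * (Δx : ℂ) * Complex.I)
      - Complex.exp (-((k : ℂ) * (Δx : ℂ)) * Complex.I)) * Complex.I_sq
  set s : ℂ := Complex.sin ((k : ℂ) * (Δx : ℂ)) with hs
  simp only [icnStepC, hp, hm]
  push_cast
  rw [← hs]
  linear_combination
    (u j * (-(R : ℂ) + (θ : ℂ) * (R : ℂ) ^ 2 * ((E - F) + 2 * s * Complex.I)
      - (θ : ℂ) ^ 2 * (R : ℂ) ^ 3 * ((E - F) ^ 2 + 2 * s * Complex.I * (E - F)
        + 4 * s ^ 2 * Complex.I ^ 2))) * hsin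
    + (u j * (4 * (θ : ℂ) * (R : ℂ) ^ 2 * s ^ 2
      - 8 * (θ : ℂ) ^ 2 * (R : ℂ) ^ 3 * s ^ 3 * Complex.I)) * Complex.I_sq
end

section
/- Truncation error of the θ-ICN method: let a ∈ ℝ, a ≠ 0, R > 0, θ ∈ ℝ, x ∈ ℝ, and let f : ℝ → ℝ be three times continuously differentiable. For Δt > 0 set Δx = aΔt/(2R) and u_Δt(j) = f(x + jΔx). Then (S_{θ,R}(u_Δt)(0) − f(x − aΔt))/Δt² tends to (θ − 1/2)·a²·f''(x) as Δt → 0⁺. In particular, the θ-ICN method is second order accurate if and only if the leading coefficient vanishes, which happens exactly when θ = 1/2. -/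
open Filter Topology

/-- The two-iteration θ-ICN step with mesh ratio `R` and weight `θ`. -/
noncomputable def icnStep (θ R : ℝ) (u : ℤ → ℝ) : ℤ → ℝ := fun j =>
  let ut1 : ℤ → ℝ := fun j => u j - R * (u (j + 1) - u (j - 1))
  let w1 : ℤ → ℝ := fun j => θ * ut1 j + (1 - θ) * u j
  let ut2 : ℤ → ℝ := fun j => u j - R * (w1 (j + 1) - w1 (j - 1))
  let w2 : ℤ → ℝ := fun j => θ * ut2 j + (1 - θ) * u j
  u j - R * (w2 (j + 1) - w2 (j - 1))

/-!
The error `S_{θ,R}(u_Δt)(0) - f(x - aΔt)` is a fixed linear combination `∑ cᵢ f(x + αᵢ Δt)` of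
eight point values: the seven-point stencil of the scheme and the foot `x - aΔt` of the
characteristic. The weights `cᵢ` have vanishing zeroth and first moments against the nodes `αᵢ`,
and second moment `(2θ - 1) a²`, so by l'Hôpital's rule the error divided by `Δt²` tends to half
the second moment times `f''(x)`.
-/

theorem icnStep_apply (θ R : ℝ) (u : ℤ → ℝ) (j : ℤ) :
    icnStep θ R u j = u j - R * (u (j + 1) - u (j - 1))
      + θ * R ^ 2 * (u (j + 2) - 2 * u j + u (j - 2))
      - θ ^ 2 * R ^ 3 * (u (j + 3) - 3 * u (j + 1) + 3 * u (j - 1) - u (j - 3)) := by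
  simp only [icnStep]
  ring_nf

theorem tendsto_div_sq_of_hasDerivAt {N N' : ℝ → ℝ} {L : ℝ}
    (hN : ∀ᶠ t in 𝓝 0, HasDerivAt N (N' t) t) (hN0 : N 0 = 0) (hN'0 : N' 0 = 0)
    (hN' : HasDerivAt N' L 0) :
    Tendsto (fun t => N t / t ^ 2) (𝓝[>] 0) (𝓝 (L / 2)) := by
  have hN_cont : Tendsto N (𝓝[>] 0) (𝓝 0) := by
    simpa [hN0] using hN.self_of_nhds.continuousAt.tendsto.mono_left nhdsWithin_le_nhds
  have hslope : Tendsto (fun t => N' t / t) (𝓝[>] 0) (𝓝 L) := by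
    refine (hasDerivAt_iff_tendsto_slope.mp hN' |>.mono_left
      (nhdsWithin_mono _ fun t ht => ne_of_gt ht)).congr' ?_
    filter_upwards with t
    simp [slope_def_field, hN'0]
  refine HasDerivAt.lhopital_zero_nhdsGT (nhdsWithin_le_nhds hN)
    (Eventually.of_forall fun t => hasDerivAt_pow 2 t) ?_ hN_cont ?_ ?_
  · filter_upwards [self_mem_nhdsWithin] with t ht
    exact mul_ne_zero (by norm_num) (pow_ne_zero _ (ne_of_gt ht))
  · simpa using ((continuous_pow 2).tendsto (0 : ℝ)).mono_left nhdsWithin_le_nhds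
  · refine (hslope.div_const 2).congr fun t => ?_
    simp [div_div, mul_comm]

theorem hasDerivAt_comp_add_mul {f : ℝ → ℝ} {x α t : ℝ}
    (hf : DifferentiableAt ℝ f (x + α * t)) :
    HasDerivAt (fun s => f (x + α * s)) (α * deriv f (x + α * t)) t := by
  simpa [mul_comm, Function.comp_def] using
    hf.hasDerivAt.comp t (((hasDerivAt_id t).const_mul α).const_add x)

theorem tendsto_sum_div_sq {ι : Type*} (s : Finset ι) (c α : ι → ℝ) {f : ℝ → ℝ} {x : ℝ}
    (hf : Differentiable ℝ f) (hf' : DifferentiableAt ℝ (deriv f) x)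
    (hc : ∑ i ∈ s, c i = 0) (hcα : ∑ i ∈ s, c i * α i = 0) :
    Tendsto (fun t => (∑ i ∈ s, c i * f (x + α i * t)) / t ^ 2) (𝓝[>] 0)
      (𝓝 ((∑ i ∈ s, c i * α i ^ 2) / 2 * deriv (deriv f) x)) := by
  have h := tendsto_div_sq_of_hasDerivAt
    (N' := fun t => ∑ i ∈ s, c i * (α i * deriv f (x + α i * t)))
    (L := ∑ i ∈ s, c i * (α i * (α i * deriv (deriv f) x)))
    (Eventually.of_forall fun t => HasDerivAt.fun_sum fun i _ =>
      (hasDerivAt_comp_add_mul (hf _)).const_mul (c i))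
    (by simp [← Finset.sum_mul, hc])
    (by simp [← mul_assoc, ← Finset.sum_mul, hcα])
    (HasDerivAt.fun_sum fun i _ => by
      simpa using ((hasDerivAt_comp_add_mul (f := deriv f) (α := α i) (t := 0)
        (by simpa using hf')).const_mul (α i)).const_mul (c i))
  convert h using 2
  rw [div_mul_eq_mul_div, Finset.sum_mul]
  congr 1
  exact Finset.sum_congr rfl fun i _ => by ring

/-- Index `i < 7` is the grid offset `0, 1, -1, 2, -2, 3, -3` of the scheme's stencil, with node
spacing `a / (2R)` per unit time step; index `7` is the exact solution `f(x - aΔt)`. -/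
def icnErrorWeight (θ R : ℝ) : Fin 8 → ℝ :=
  ![1 - 2 * θ * R ^ 2, -R + 3 * θ ^ 2 * R ^ 3, R - 3 * θ ^ 2 * R ^ 3, θ * R ^ 2, θ * R ^ 2,
    -(θ ^ 2 * R ^ 3), θ ^ 2 * R ^ 3, -1]

noncomputable def icnErrorNode (a R : ℝ) : Fin 8 → ℝ :=
  ![0, a / (2 * R), -(a / (2 * R)), 2 * (a / (2 * R)), -(2 * (a / (2 * R))), 3 * (a / (2 * R)),
    -(3 * (a / (2 * R))), -a]

theorem icnStep_sub_eq_sum (θ R a x t : ℝ) (f : ℝ → ℝ) :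
    icnStep θ R (fun j : ℤ => f (x + (j : ℝ) * (a * t / (2 * R)))) 0 - f (x - a * t)
      = ∑ i, icnErrorWeight θ R i * f (x + icnErrorNode a R i * t) := by
  simp only [icnStep_apply, Fin.sum_univ_eight, icnErrorWeight, icnErrorNode, Matrix.cons_val]
  push_cast
  ring_nf

theorem sum_icnErrorWeight (θ R : ℝ) : ∑ i, icnErrorWeight θ R i = 0 := by
  simp only [Fin.sum_univ_eight, icnErrorWeight, Matrix.cons_val]
  ring

theorem sum_icnErrorWeight_mul_node (θ a : ℝ) {R : ℝ} (hR : R ≠ 0) :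
    ∑ i, icnErrorWeight θ R i * icnErrorNode a R i = 0 := by
  simp only [Fin.sum_univ_eight, icnErrorWeight, icnErrorNode, Matrix.cons_val]
  field_simp
  ring

theorem sum_icnErrorWeight_mul_node_sq (θ a : ℝ) {R : ℝ} (hR : R ≠ 0) :
    ∑ i, icnErrorWeight θ R i * icnErrorNode a R i ^ 2 = (2 * θ - 1) * a ^ 2 := by
  simp only [Fin.sum_univ_eight, icnErrorWeight, icnErrorNode, Matrix.cons_val]
  field_simp
  ring

theorem icnStep_truncation_error (a R θ x : ℝ) (ha : a ≠ 0) (hR : 0 < R)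
    (f : ℝ → ℝ) (hf : ContDiff ℝ 3 f) :
    Tendsto
      (fun Δt : ℝ =>
        (icnStep θ R (fun j : ℤ => f (x + (j : ℝ) * (a * Δt / (2 * R)))) 0
            - f (x - a * Δt)) / Δt ^ 2)
      (𝓝[>] 0) (𝓝 ((θ - 1 / 2) * a ^ 2 * deriv (deriv f) x)) ∧
    ((θ - 1 / 2) * a ^ 2 = 0 ↔ θ = 1 / 2) := by
  refine ⟨?_, by simp [ha, sub_eq_zero]⟩
  have hf' : ContDiff ℝ 2 (deriv f) := (contDiff_succ_iff_deriv (n := 2)).mp hf |>.2.2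
  have h := tendsto_sum_div_sq Finset.univ (icnErrorWeight θ R) (icnErrorNode a R)
    (hf.differentiable (by norm_num)) (hf'.differentiable (by norm_num) x)
    (sum_icnErrorWeight θ R) (sum_icnErrorWeight_mul_node θ a hR.ne')
  rw [sum_icnErrorWeight_mul_node_sq θ a hR.ne'] at h
  simp_rw [icnStep_sub_eq_sum]
  convert h using 2
  ring
end

section
/- Truncation error of the swapped θ-ICN method: let a ∈ ℝ, a ≠ 0, R > 0, θ ∈ ℝ, x ∈ ℝ, and let f : ℝ → ℝ be three times continuously differentiable. For Δt > 0 set Δx = aΔt/(2R) and u_Δt(j) = f(x + jΔx). Then (T_{θ,R}(u_Δt)(0) − f(x − aΔt))/Δt² tends to (1/2 − θ)·a²·f''(x) as Δt → 0⁺; in particular the swapped θ-ICN method is only first order accurate when θ ≠ 1/2. -/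
open Filter Topology

/-- The swapped θ-ICN step with mesh ratio `R` and weight `θ`. -/
noncomputable def swappedIcnStep (θ R : ℝ) (u : ℤ → ℝ) : ℤ → ℝ := fun j =>
  let ut1 : ℤ → ℝ := fun j => u j - R * (u (j + 1) - u (j - 1))
  let w1 : ℤ → ℝ := fun j => θ * ut1 j + (1 - θ) * u j
  let ut2 : ℤ → ℝ := fun j => u j - R * (w1 (j + 1) - w1 (j - 1))
  let w2 : ℤ → ℝ := fun j => (1 - θ) * ut2 j + θ * u j
  u j - R * (w2 (j + 1) - w2 (j - 1))

private lemma hasDerivAt_comp_affine (f : ℝ → ℝ) (hf : Differentiable ℝ f) (x c t : ℝ) :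
    HasDerivAt (fun s : ℝ => f (x + c * s)) (deriv f (x + c * t) * c) t := by
  have h1 : HasDerivAt (fun s : ℝ => x + c * s) c t := by
    simpa using ((hasDerivAt_id t).const_mul c).const_add x
  exact (hf _).hasDerivAt.comp t h1

noncomputable def icnG (f : ℝ → ℝ) (θ R a x : ℝ) : ℝ → ℝ := fun t =>
  ((f x - R * (f (x + a/(2*R) * t) - f (x + -(a/(2*R)) * t)))
    + (1-θ)*R^2 * ((f (x + 2*(a/(2*R)) * t) - 2*f x) + f (x + -(2*(a/(2*R))) * t)))
    - θ*(1-θ)*R^3 * (((f (x + 3*(a/(2*R)) * t) - 3 * f (x + a/(2*R) * t))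
        + 3 * f (x + -(a/(2*R)) * t)) - f (x + -(3*(a/(2*R))) * t))
    - f (x + -a * t)

noncomputable def icnG' (f : ℝ → ℝ) (θ R a x : ℝ) : ℝ → ℝ := fun t =>
  ((-(R * (deriv f (x + a/(2*R) * t) * (a/(2*R)) - deriv f (x + -(a/(2*R)) * t) * (-(a/(2*R))))))
    + (1-θ)*R^2 * ((deriv f (x + 2*(a/(2*R)) * t) * (2*(a/(2*R))))
        + deriv f (x + -(2*(a/(2*R))) * t) * (-(2*(a/(2*R))))))
    - θ*(1-θ)*R^3 * (((deriv f (x + 3*(a/(2*R)) * t) * (3*(a/(2*R)))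
        - 3 * (deriv f (x + a/(2*R) * t) * (a/(2*R))))
        + 3 * (deriv f (x + -(a/(2*R)) * t) * (-(a/(2*R)))))
        - deriv f (x + -(3*(a/(2*R))) * t) * (-(3*(a/(2*R)))))
    - deriv f (x + -a * t) * (-a)

private lemma icnG_hasDeriv (f : ℝ → ℝ) (hf : Differentiable ℝ f) (θ R a x t : ℝ) :
    HasDerivAt (icnG f θ R a x) (icnG' f θ R a x t) t := by
  have h1 := hasDerivAt_comp_affine f hf x (a/(2*R)) t
  have h2 := hasDerivAt_comp_affine f hf x (-(a/(2*R))) t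
  have h3 := hasDerivAt_comp_affine f hf x (2*(a/(2*R))) t
  have h4 := hasDerivAt_comp_affine f hf x (-(2*(a/(2*R)))) t
  have h5 := hasDerivAt_comp_affine f hf x (3*(a/(2*R))) t
  have h6 := hasDerivAt_comp_affine f hf x (-(3*(a/(2*R)))) t
  have h7 := hasDerivAt_comp_affine f hf x (-a) t
  have E := (((((h1.sub h2).const_mul R).const_sub (f x)).add
      (((h3.sub_const (2*f x)).add h4).const_mul ((1-θ)*R^2))).sub
      ((((h5.sub (h1.const_mul 3)).add (h2.const_mul 3)).sub h6).const_mul (θ*(1-θ)*R^3))).sub h7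
  exact E

private lemma icnG'_hasDeriv (f : ℝ → ℝ) (hf : Differentiable ℝ (deriv f)) (θ R a x t : ℝ) :
    HasDerivAt (icnG' f θ R a x)
      (((-(R * ((deriv (deriv f) (x + a/(2*R) * t) * (a/(2*R))) * (a/(2*R))
          - (deriv (deriv f) (x + -(a/(2*R)) * t) * (-(a/(2*R)))) * (-(a/(2*R))))))
        + (1-θ)*R^2 * (((deriv (deriv f) (x + 2*(a/(2*R)) * t) * (2*(a/(2*R)))) * (2*(a/(2*R))))
            + ((deriv (deriv f) (x + -(2*(a/(2*R))) * t) * (-(2*(a/(2*R))))) * (-(2*(a/(2*R)))))))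
        - θ*(1-θ)*R^3 * ((((deriv (deriv f) (x + 3*(a/(2*R)) * t) * (3*(a/(2*R)))) * (3*(a/(2*R)))
            - 3 * ((deriv (deriv f) (x + a/(2*R) * t) * (a/(2*R))) * (a/(2*R))))
            + 3 * ((deriv (deriv f) (x + -(a/(2*R)) * t) * (-(a/(2*R)))) * (-(a/(2*R)))))
            - (deriv (deriv f) (x + -(3*(a/(2*R))) * t) * (-(3*(a/(2*R))))) * (-(3*(a/(2*R)))))
        - (deriv (deriv f) (x + -a * t) * (-a)) * (-a)) t := by
  have h1 := (hasDerivAt_comp_affine (deriv f) hf x (a/(2*R)) t).mul_const (a/(2*R))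
  have h2 := (hasDerivAt_comp_affine (deriv f) hf x (-(a/(2*R))) t).mul_const (-(a/(2*R)))
  have h3 := (hasDerivAt_comp_affine (deriv f) hf x (2*(a/(2*R))) t).mul_const (2*(a/(2*R)))
  have h4 := (hasDerivAt_comp_affine (deriv f) hf x (-(2*(a/(2*R)))) t).mul_const (-(2*(a/(2*R))))
  have h5 := (hasDerivAt_comp_affine (deriv f) hf x (3*(a/(2*R))) t).mul_const (3*(a/(2*R)))
  have h6 := (hasDerivAt_comp_affine (deriv f) hf x (-(3*(a/(2*R)))) t).mul_const (-(3*(a/(2*R))))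
  have h7 := (hasDerivAt_comp_affine (deriv f) hf x (-a) t).mul_const (-a)
  exact ((((h1.sub h2).const_mul R).neg.add ((h3.add h4).const_mul ((1-θ)*R^2))).sub
      ((((h5.sub (h1.const_mul 3)).add (h2.const_mul 3)).sub h6).const_mul (θ*(1-θ)*R^3))).sub h7

theorem swappedIcnStep_truncation_error (a R θ x : ℝ) (ha : a ≠ 0) (hR : 0 < R)
    (f : ℝ → ℝ) (hf : ContDiff ℝ 3 f) :
    Tendsto
      (fun Δt : ℝ =>
        (swappedIcnStep θ R (fun j : ℤ => f (x + (j : ℝ) * (a * Δt / (2 * R)))) 0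
            - f (x - a * Δt)) / Δt ^ 2)
      (𝓝[>] 0) (𝓝 ((1 / 2 - θ) * a ^ 2 * deriv (deriv f) x)) := by
  have hR0 : R ≠ 0 := hR.ne'
  have hf1 : Differentiable ℝ f := hf.differentiable (by norm_num)
  have h3 : ContDiff ℝ ((2:ℕ) + 1) f := by exact_mod_cast hf
  have hfd : ContDiff ℝ 2 (deriv f) := (contDiff_succ_iff_deriv.mp h3).2.2
  have hf2 : Differentiable ℝ (deriv f) := hfd.differentiable (by norm_num)
  set L : ℝ := (1 / 2 - θ) * a ^ 2 * deriv (deriv f) x with hL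
  -- value of G at 0
  have hG0 : icnG f θ R a x 0 = 0 := by
    simp only [icnG, mul_zero, add_zero]; ring
  have hG'0 : icnG' f θ R a x 0 = 0 := by
    simp only [icnG', mul_zero, add_zero]
    field_simp
    ring
  -- G' has derivative 2L at 0
  have hG'deriv : HasDerivAt (icnG' f θ R a x) (2 * L) 0 := by
    have h := icnG'_hasDeriv f hf2 θ R a x 0
    convert h using 1
    simp only [mul_zero, add_zero]
    field_simp
    ring
  -- numerator tends to 0
  have hnum : Tendsto (icnG f θ R a x) (𝓝[>] (0:ℝ)) (𝓝 0) := by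
    have := ((icnG_hasDeriv f hf1 θ R a x 0).continuousAt.tendsto).mono_left
      (nhdsWithin_le_nhds (s := Set.Ioi (0:ℝ)))
    rwa [hG0] at this
  have hden : Tendsto (fun t : ℝ => t ^ 2) (𝓝[>] (0:ℝ)) (𝓝 0) := by
    have h := ((continuous_pow 2 (M := ℝ)).tendsto 0).mono_left
      (nhdsWithin_le_nhds (s := Set.Ioi (0:ℝ)))
    simpa using h
  -- quotient of derivatives
  have hdiv : Tendsto (fun t => icnG' f θ R a x t / (2 * t)) (𝓝[>] (0:ℝ)) (𝓝 L) := by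
    have hslope := hasDerivAt_iff_tendsto_slope.mp hG'deriv
    have hslope2 : Tendsto (fun t => icnG' f θ R a x t / t) (𝓝[≠] (0:ℝ)) (𝓝 (2 * L)) := by
      refine hslope.congr fun t => ?_
      simp [slope, hG'0, div_eq_inv_mul]
    have h2 : Tendsto (fun t => icnG' f θ R a x t / t / 2) (𝓝[≠] (0:ℝ)) (𝓝 (2 * L / 2)) :=
      hslope2.div_const 2
    have h3 : Tendsto (fun t => icnG' f θ R a x t / t / 2) (𝓝[>] (0:ℝ)) (𝓝 (2 * L / 2)) :=
      h2.mono_left (nhdsWithin_mono 0 fun y hy => ne_of_gt hy)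
    have he : (2 : ℝ) * L / 2 = L := by ring
    rw [he] at h3
    refine h3.congr fun t => ?_
    rw [div_div, mul_comm]
  -- eventual derivative hypotheses
  have hff' : ∀ᶠ t in 𝓝[>] (0:ℝ), HasDerivAt (icnG f θ R a x) (icnG' f θ R a x t) t :=
    Filter.Eventually.of_forall fun t => icnG_hasDeriv f hf1 θ R a x t
  have hgg' : ∀ᶠ t in 𝓝[>] (0:ℝ), HasDerivAt (fun s : ℝ => s ^ 2) (2 * t) t :=
    Filter.Eventually.of_forall fun t => by simpa using hasDerivAt_pow 2 t
  have hg' : ∀ᶠ t in 𝓝[>] (0:ℝ), (2 : ℝ) * t ≠ 0 := by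
    filter_upwards [self_mem_nhdsWithin] with t ht
    exact mul_ne_zero two_ne_zero (ne_of_gt ht)
  have main := HasDerivAt.lhopital_zero_nhdsGT hff' hgg' hg' hnum hden hdiv
  have hkey : (fun Δt : ℝ =>
      (swappedIcnStep θ R (fun j : ℤ => f (x + (j : ℝ) * (a * Δt / (2 * R)))) 0
          - f (x - a * Δt)) / Δt ^ 2) = fun t => icnG f θ R a x t / t ^ 2 := by
    funext t
    congr 1
    simp only [swappedIcnStep, icnG]
    push_cast
    ring_nf
  rw [hkey]
  exact main
end

section
/- Truncation error of the AA θ-ICN method over two time steps: let a ∈ ℝ, a ≠ 0, R > 0, θ_o, θ_e ∈ ℝ, x ∈ ℝ, and let f : ℝ → ℝ be three times continuously differentiable. For Δt > 0 set Δx = aΔt/(2R) and u_Δt(j) = f(x + jΔx). Then (S_{θ_e,R}(S_{θ_o,R}(u_Δt))(0) − f(x − 2aΔt))/Δt² tends to (θ_o + θ_e − 1)·a²·f''(x) as Δt → 0⁺. In particular, if θ_o + θ_e = 1 the limit is 0, i.e. the AA θ-ICN method is second order accurate. -/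
/-!
One step of θ-ICN is the polynomial `1 - D + θ D² - θ² D³` in the central difference
`D = R (E - E⁻¹)`, so two steps form a finite stencil of width 13 whose weights are products of
single-step weights. Expanding the smooth profile to second order with Peano remainder, the error
of a stencil against the exact shift is governed by its first three moments: a single step has
moments `1, -2Rr, 8θR²r²` for grid spacing `r`, the two-step stencil therefore `1, -4Rr,
8R²r²(θₒ + θₑ + 1)`, and with `r = a/(2R)` the excess of the second moment over that of the exact
shift `-2a` is `2a²(θₒ + θₑ - 1)`.
-/

open Filter Topology

open Asymptotics

theorem taylorWithinEval_two_univ (f : ℝ → ℝ) (x y : ℝ) :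
    taylorWithinEval f 2 Set.univ x y
      = f x + deriv f x * (y - x) + deriv (deriv f) x / 2 * (y - x) ^ 2 := by
  simp only [taylor_within_apply, Finset.sum_range_succ, Finset.sum_range_zero,
    iteratedDerivWithin_univ, iteratedDeriv_succ, iteratedDeriv_zero, smul_eq_mul,
    Nat.factorial_two, Nat.factorial_one, Nat.factorial_zero]
  push_cast
  ring

theorem isLittleO_sub_taylor_two {f : ℝ → ℝ} (hf : ContDiff ℝ 2 f) (x c : ℝ) :
    (fun h => f (x + c * h) - (f x + deriv f x * (c * h) + deriv (deriv f) x / 2 * (c * h) ^ 2))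
      =o[𝓝 0] fun h => h ^ 2 := by
  have hk : Tendsto (fun h : ℝ => x + c * h) (𝓝 0) (𝓝 x) := by
    simpa using ((tendsto_id (x := 𝓝 (0 : ℝ))).const_mul c).const_add x
  have hsq : (fun h : ℝ => (x + c * h - x) ^ 2) =O[𝓝 0] fun h => h ^ 2 := by
    simpa only [add_sub_cancel_left, mul_pow] using
      (isBigO_refl (fun h : ℝ => h ^ 2) (𝓝 (0 : ℝ))).const_mul_left (c ^ 2)
  simpa only [Function.comp_def, taylorWithinEval_two_univ, add_sub_cancel_left] using
    ((taylor_isLittleO_univ (x₀ := x) (n := 2) hf).comp_tendsto hk).trans_isBigO hsq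

theorem tendsto_sum_sub_shift_div_sq {ι : Type*} (s : Finset ι) (β c : ι → ℝ) (d : ℝ)
    {f : ℝ → ℝ} (hf : ContDiff ℝ 2 f) (x : ℝ) (h0 : ∑ i ∈ s, β i = 1)
    (h1 : ∑ i ∈ s, β i * c i = d) :
    Tendsto (fun h => (∑ i ∈ s, β i * f (x + c i * h) - f (x + d * h)) / h ^ 2) (𝓝[≠] 0)
      (𝓝 ((∑ i ∈ s, β i * c i ^ 2 - d ^ 2) * deriv (deriv f) x / 2)) := by
  set T : ℝ → ℝ → ℝ := fun c h =>
    f x + deriv f x * (c * h) + deriv (deriv f) x / 2 * (c * h) ^ 2 with hT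
  have hrem : (fun h => ∑ i ∈ s, β i * (f (x + c i * h) - T (c i) h) - (f (x + d * h) - T d h))
      =o[𝓝 0] fun h => h ^ 2 :=
    (IsLittleO.fun_sum fun i _ => (isLittleO_sub_taylor_two hf x (c i)).const_mul_left (β i)).sub
      (isLittleO_sub_taylor_two hf x d)
  have hlim := (hrem.tendsto_div_nhds_zero.mono_left (nhdsWithin_le_nhds (s := {0}ᶜ))).add_const
    ((∑ i ∈ s, β i * c i ^ 2 - d ^ 2) * deriv (deriv f) x / 2)
  rw [zero_add] at hlim
  refine hlim.congr' (eventually_nhdsWithin_of_forall fun h (hh : h ≠ 0) => ?_)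
  have hsum : ∑ i ∈ s, β i * T (c i) h
      = T d h + deriv (deriv f) x / 2 * (∑ i ∈ s, β i * c i ^ 2 - d ^ 2) * h ^ 2 := by
    have hterm : ∀ i ∈ s, β i * T (c i) h = f x * β i + deriv f x * h * (β i * c i)
        + deriv (deriv f) x / 2 * h ^ 2 * (β i * c i ^ 2) := fun i _ => by rw [hT]; ring
    rw [Finset.sum_congr rfl hterm, Finset.sum_add_distrib, Finset.sum_add_distrib,
      ← Finset.mul_sum, ← Finset.mul_sum, ← Finset.mul_sum, h0, h1, hT]
    ring
  simp only [mul_sub, Finset.sum_sub_distrib, hsum]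
  rw [eq_div_iff (pow_ne_zero 2 hh), add_mul, div_mul_cancel₀ _ (pow_ne_zero 2 hh)]
  ring

section ProductStencil

variable {ι κ : Type*} [Fintype ι] [Fintype κ] (p : ι → ℝ) (q : κ → ℝ) (c : ι → ℝ) (d : κ → ℝ)

theorem sum_prod_mul : ∑ z : ι × κ, p z.1 * q z.2 = (∑ i, p i) * ∑ j, q j := by
  rw [Fintype.sum_prod_type, Finset.sum_mul_sum]

theorem sum_prod_mul_add :
    ∑ z : ι × κ, p z.1 * q z.2 * (c z.1 + d z.2)
      = (∑ i, p i * c i) * ∑ j, q j + (∑ i, p i) * ∑ j, q j * d j := by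
  simp only [Fintype.sum_prod_type, Finset.sum_mul_sum, ← Finset.sum_add_distrib]
  exact Finset.sum_congr rfl fun i _ => Finset.sum_congr rfl fun j _ => by ring

theorem sum_prod_mul_add_sq :
    ∑ z : ι × κ, p z.1 * q z.2 * (c z.1 + d z.2) ^ 2
      = (∑ i, p i * c i ^ 2) * ∑ j, q j + 2 * (∑ i, p i * c i) * (∑ j, q j * d j)
        + (∑ i, p i) * ∑ j, q j * d j ^ 2 := by
  rw [Fintype.sum_prod_type, mul_assoc 2, Finset.sum_mul_sum, Finset.sum_mul_sum,
    Finset.sum_mul_sum]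
  simp only [Finset.mul_sum, ← Finset.sum_add_distrib]
  exact Finset.sum_congr rfl fun i _ => Finset.sum_congr rfl fun j _ => by ring

end ProductStencil

/-- Coefficients of `1 - D + θ D² - θ² D³`, `D = R (E - E⁻¹)`, at the shifts `E⁻³, …, E³`. -/
noncomputable def icnWeight (θ R : ℝ) : Fin 7 → ℝ :=
  ![θ ^ 2 * R ^ 3, θ * R ^ 2, R - 3 * θ ^ 2 * R ^ 3, 1 - 2 * θ * R ^ 2, -R + 3 * θ ^ 2 * R ^ 3,
    θ * R ^ 2, -(θ ^ 2 * R ^ 3)]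

def icnOffset (r : ℝ) (k : Fin 7) : ℝ := ((k : ℝ) - 3) * r

theorem icnStep_eq_sum (θ R : ℝ) (u : ℤ → ℝ) (j : ℤ) :
    icnStep θ R u j = ∑ k : Fin 7, icnWeight θ R k * u (j + k - 3) := by
  simp only [icnStep, Fin.sum_univ_seven, icnWeight, Matrix.cons_val, Fin.coe_ofNat_eq_mod,
    Nat.reduceMod]
  push_cast
  ring_nf

theorem sum_icnWeight (θ R : ℝ) : ∑ k : Fin 7, icnWeight θ R k = 1 := by
  simp only [Fin.sum_univ_seven, icnWeight, Matrix.cons_val]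
  ring

theorem sum_icnWeight_mul_icnOffset (θ R r : ℝ) :
    ∑ k : Fin 7, icnWeight θ R k * icnOffset r k = -2 * R * r := by
  simp only [Fin.sum_univ_seven, icnWeight, icnOffset, Matrix.cons_val, Fin.coe_ofNat_eq_mod,
    Nat.reduceMod]
  push_cast
  ring

theorem sum_icnWeight_mul_icnOffset_sq (θ R r : ℝ) :
    ∑ k : Fin 7, icnWeight θ R k * icnOffset r k ^ 2 = 8 * θ * R ^ 2 * r ^ 2 := by
  simp only [Fin.sum_univ_seven, icnWeight, icnOffset, Matrix.cons_val, Fin.coe_ofNat_eq_mod,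
    Nat.reduceMod]
  push_cast
  ring

theorem icnStep_icnStep_sample (θo θe R r t x : ℝ) (f : ℝ → ℝ) :
    icnStep θe R (icnStep θo R fun j : ℤ => f (x + (j : ℝ) * (r * t))) 0
      = ∑ p : Fin 7 × Fin 7, icnWeight θe R p.1 * icnWeight θo R p.2
          * f (x + (icnOffset r p.1 + icnOffset r p.2) * t) := by
  simp only [icnStep_eq_sum, Fintype.sum_prod_type, Finset.mul_sum, mul_assoc, icnOffset]
  refine Finset.sum_congr rfl fun k _ => Finset.sum_congr rfl fun l _ => ?_
  push_cast
  ring_nf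

theorem aaICN_truncation_error_general (a R θo θe x : ℝ) (hR : 0 < R)
    (f : ℝ → ℝ) (hf : ContDiff ℝ 3 f) :
    Tendsto
      (fun Δt : ℝ =>
        (icnStep θe R (icnStep θo R (fun j : ℤ => f (x + (j : ℝ) * (a * Δt / (2 * R))))) 0
            - f (x - 2 * a * Δt)) / Δt ^ 2)
      (𝓝[>] 0) (𝓝 ((θo + θe - 1) * a ^ 2 * deriv (deriv f) x)) ∧
    (θo + θe = 1 →
      Tendsto
        (fun Δt : ℝ =>
          (icnStep θe R (icnStep θo R (fun j : ℤ => f (x + (j : ℝ) * (a * Δt / (2 * R))))) 0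
              - f (x - 2 * a * Δt)) / Δt ^ 2)
        (𝓝[>] 0) (𝓝 0)) := by
  have hR0 : R ≠ 0 := hR.ne'
  have hstencil := tendsto_sum_sub_shift_div_sq Finset.univ
    (fun p : Fin 7 × Fin 7 => icnWeight θe R p.1 * icnWeight θo R p.2)
    (fun p => icnOffset (a / (2 * R)) p.1 + icnOffset (a / (2 * R)) p.2)
    (-4 * R * (a / (2 * R))) (hf.of_le (by norm_num)) x
    (by rw [sum_prod_mul, sum_icnWeight, sum_icnWeight, one_mul])
    (by rw [sum_prod_mul_add, sum_icnWeight_mul_icnOffset, sum_icnWeight_mul_icnOffset,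
          sum_icnWeight, sum_icnWeight]; ring)
  rw [sum_prod_mul_add_sq, sum_icnWeight_mul_icnOffset, sum_icnWeight_mul_icnOffset,
    sum_icnWeight_mul_icnOffset_sq, sum_icnWeight_mul_icnOffset_sq, sum_icnWeight,
    sum_icnWeight] at hstencil
  have hshift (t : ℝ) : x - 2 * a * t = x + -4 * R * (a / (2 * R)) * t := by field_simp; ring
  have hmain : Tendsto
      (fun Δt : ℝ =>
        (icnStep θe R (icnStep θo R (fun j : ℤ => f (x + (j : ℝ) * (a * Δt / (2 * R))))) 0
            - f (x - 2 * a * Δt)) / Δt ^ 2)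
      (𝓝[>] 0) (𝓝 ((θo + θe - 1) * a ^ 2 * deriv (deriv f) x)) := by
    simp_rw [mul_div_right_comm a, icnStep_icnStep_sample, hshift]
    convert hstencil.mono_left (nhdsGT_le_nhdsNE 0) using 2
    field_simp
    ring
  exact ⟨hmain, fun hθ => by simpa [hθ] using hmain⟩

theorem aaICN_truncation_error (a R θo θe x : ℝ) (ha : a ≠ 0) (hR : 0 < R)
    (f : ℝ → ℝ) (hf : ContDiff ℝ 3 f) :
    Tendsto
      (fun Δt : ℝ =>
        (icnStep θe R (icnStep θo R (fun j : ℤ => f (x + (j : ℝ) * (a * Δt / (2 * R))))) 0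
            - f (x - 2 * a * Δt)) / Δt ^ 2)
      (𝓝[>] 0) (𝓝 ((θo + θe - 1) * a ^ 2 * deriv (deriv f) x)) ∧
    (θo + θe = 1 →
      Tendsto
        (fun Δt : ℝ =>
          (icnStep θe R (icnStep θo R (fun j : ℤ => f (x + (j : ℝ) * (a * Δt / (2 * R))))) 0
              - f (x - 2 * a * Δt)) / Δt ^ 2)
        (𝓝[>] 0) (𝓝 0)) :=
  aaICN_truncation_error_general a R θo θe x hR f hf
end
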